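/- arXiv:2401.00638 — 2 statements merged into one kernel-verified Lean document; each statement's English description precedes it below -/
import Mathlib

section
/- Write ζG = ⟨z_1⟩ × ⟨z_2⟩ × ⋯ × ⟨z_r⟩ ≅ ℤ_{p^{n_1}} × ℤ_{p^{n_2}} × ⋯ × ℤ_{p^{n_r}} with n_1 ≥ n_2 ≥ ⋯ ≥ n_r ≥ 1. Then n ≤ n_1 ≤ n+1 and m ≤ n_2 ≤ m+1 (and n_i = 1 for 3 ≤ i ≤ r). -/
/-!
Since `N ≤ ζG` and `(ζG)^p ≤ N`, comparing exponents gives `n ≤ n₁ ≤ n + 1`. The other bounds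
come from counting solutions of `x ^ p = 1`. The generators `z_i` of order greater than `p^k`
yield independent elements `z_i ^ p^(n_i - 1)` of order `p` inside `(ζG)^(p^k)`, so there are at
most `c` of them when `(ζG)^(p^k)` lies in a subgroup with at most `p^c` such solutions: with
`k = 1` and the subgroup `N` this gives `n₃ = 1`, and with `k = m + 1` and the cyclic subgroup of
`N` containing `N^(p^m)` it gives `n₂ ≤ m + 1`. Conversely, if `n₂ < m` then `(ζG)^(p^n₂)` lies in
the cyclic group `⟨z₁⟩`, which cannot contain two independent elements of order `p` of `N`.
-/

open scoped commutatorElement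

open Subgroup

theorem IsCyclic.natCard_pow_eq_one_le {α : Type*} [Group α] [Finite α] [IsCyclic α] {n : ℕ}
    (hn : 0 < n) : Nat.card {a : α // a ^ n = 1} ≤ n := by
  classical
  cases nonempty_fintype α
  rw [Nat.card_eq_fintype_card, Fintype.card_subtype]
  exact IsCyclic.card_pow_eq_one_le hn

theorem Prod.natCard_pow_eq_one {α β : Type*} [Monoid α] [Monoid β] (n : ℕ) :
    Nat.card {a : α × β // a ^ n = 1} =
      Nat.card {a : α // a ^ n = 1} * Nat.card {b : β // b ^ n = 1} := by
  rw [← Nat.card_prod]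
  exact Nat.card_congr ((Equiv.subtypeEquivRight fun _ => Prod.ext_iff).trans
    (Equiv.subtypeProdEquivProd (p := fun a : α => a ^ n = 1) (q := fun b : β => b ^ n = 1)))

theorem MulEquiv.natCard_pow_eq_one {α β : Type*} [Monoid α] [Monoid β] (e : α ≃* β) (n : ℕ) :
    Nat.card {a : α // a ^ n = 1} = Nat.card {b : β // b ^ n = 1} :=
  Nat.card_congr (e.toEquiv.subtypeEquiv fun a => by simp [← map_pow])

theorem orderOf_pow_pow_pred {G : Type*} [Monoid G] {x : G} {p e : ℕ} (hp : p ≠ 0)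
    (he : 1 ≤ e) (hx : orderOf x = p ^ e) : orderOf (x ^ p ^ (e - 1)) = p := by
  rw [orderOf_pow_of_dvd (pow_ne_zero _ hp) (hx ▸ pow_dvd_pow p (Nat.sub_le e 1)), hx,
    Nat.pow_div (Nat.sub_le e 1) (Nat.pos_of_ne_zero hp), Nat.sub_sub_self he, pow_one]

theorem pow_card_le_natCard_pow_eq_one_of_iSupIndep {G ι : Type*} [Group G] [Finite G]
    [Fintype ι] {p : ℕ} {H : Subgroup G} {w : ι → G} (hwH : ∀ i, w i ∈ H)
    (hw : ∀ i, orderOf (w i) = p)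
    (hcomm : Pairwise fun i j => Commute (w i) (w j))
    (hind : iSupIndep fun i => zpowers (w i)) :
    p ^ Fintype.card ι ≤ Nat.card {h : H // h ^ p = 1} := by
  have hcomm' : Pairwise fun i j =>
      ∀ x y : G, x ∈ zpowers (w i) → y ∈ zpowers (w j) → Commute x y := by
    intro i j hij x y hx hy
    obtain ⟨a, rfl⟩ := mem_zpowers_iff.mp hx
    obtain ⟨b, rfl⟩ := mem_zpowers_iff.mp hy
    exact (hcomm hij).zpow_zpow a b
  set φ := noncommPiCoprod hcomm'
  have hφH (x) : φ x ∈ H :=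
    (noncommPiCoprod_range.trans_le (iSup_le fun i => zpowers_le.mpr (hwH i))) ⟨x, rfl⟩
  have hφp (x) : φ x ^ p = 1 := by
    have : x ^ p = 1 := funext fun i => by
      rw [Pi.pow_apply, ← hw i, ← Nat.card_zpowers, pow_card_eq_one', Pi.one_apply]
    rw [← map_pow, this, map_one]
  calc p ^ Fintype.card ι = Nat.card (∀ i, zpowers (w i)) := by
        simp [Nat.card_pi, Nat.card_zpowers, hw]
    _ ≤ Nat.card {h : H // h ^ p = 1} :=
      Nat.card_le_card_of_injective (fun x => ⟨⟨φ x, hφH x⟩, Subtype.ext (hφp x)⟩)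
        fun x y h => injective_noncommPiCoprod_of_iSupIndep hind
          (congrArg (fun h : {h : H // h ^ p = 1} => (h : G)) h)

theorem pow_mem_of_mem_iSup_zpowers {G ι : Type*} [Group G] {z : ι → G}
    (hz : ∀ i, z i ∈ center G) {H : Subgroup G} {k : ℕ}
    (hH : ∀ i, ¬ orderOf (z i) ∣ k → z i ∈ H) {g : G} (hg : g ∈ ⨆ i, zpowers (z i)) :
    g ^ k ∈ H := by
  have hcen : ⨆ i, zpowers (z i) ≤ center G := iSup_le fun i => zpowers_le.mpr (hz i)
  induction hg using iSup_induction' with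
  | hp i x hx =>
    obtain ⟨t, rfl⟩ := mem_zpowers_iff.mp hx
    rw [← zpow_natCast, ← zpow_mul, mul_comm, zpow_mul, zpow_natCast]
    by_cases hdvd : orderOf (z i) ∣ k
    · rw [orderOf_dvd_iff_pow_eq_one.mp hdvd, one_zpow]
      exact one_mem H
    · exact zpow_mem (pow_mem (hH i hdvd) k) t
  | h1 => rw [one_pow]; exact one_mem H
  | hmul x y hx hy ihx ihy =>
    rw [(show Commute x y from mem_center_iff.mp (hcen hy) x).mul_pow]
    exact mul_mem ihx ihy

theorem Prod.disjoint_zpowers_inl_inr {α β : Type*} [Group α] [Group β] (a : α) (b : β) :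
    Disjoint (zpowers (MonoidHom.inl α β a)) (zpowers (MonoidHom.inr α β b)) := by
  rw [disjoint_def]
  intro x hx hy
  obtain ⟨s, rfl⟩ := mem_zpowers_iff.mp hx
  obtain ⟨t, ht⟩ := mem_zpowers_iff.mp hy
  simp_all [Prod.ext_iff]

theorem ZMod.multiplicative_pow_self {k : ℕ} (x : Multiplicative (ZMod k)) : x ^ k = 1 := by
  simpa only [show Nat.card (Multiplicative (ZMod k)) = k from Nat.card_zmod k]
    using pow_card_eq_one' (x := x)

section ZModProd

variable {G : Type*} [Group G] {N : Subgroup G} {k l : ℕ}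

theorem pow_eq_one_of_mulEquiv_zmod_prod
    (θ : N ≃* Multiplicative (ZMod k) × Multiplicative (ZMod l)) (hlk : l ∣ k) {g : G}
    (hg : g ∈ N) : g ^ k = 1 := by
  obtain ⟨d, rfl⟩ := hlk
  have : θ (⟨g, hg⟩ ^ (l * d)) = 1 := by
    rw [map_pow, Prod.ext_iff]
    refine ⟨ZMod.multiplicative_pow_self _, ?_⟩
    rw [Prod.pow_snd, pow_mul, ZMod.multiplicative_pow_self, one_pow, Prod.snd_one]
  simpa using congrArg Subtype.val (θ.map_eq_one_iff.mp this)

theorem exists_disjoint_zpowers_of_mulEquiv_zmod_prod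
    (θ : N ≃* Multiplicative (ZMod k) × Multiplicative (ZMod l)) :
    ∃ u ∈ N, ∃ v ∈ N, orderOf u = k ∧ orderOf v = l ∧ Disjoint (zpowers u) (zpowers v) := by
  set ι : _ →* G := N.subtype.comp θ.symm.toMonoidHom
  have hι : Function.Injective ι := Subtype.val_injective.comp θ.symm.injective
  have hgen (n : ℕ) : orderOf (Multiplicative.ofAdd (1 : ZMod n)) = n := by
    rw [orderOf_ofAdd_eq_addOrderOf, ZMod.addOrderOf_one]
  refine ⟨ι (MonoidHom.inl _ _ (.ofAdd 1)), (θ.symm _).2, ι (MonoidHom.inr _ _ (.ofAdd 1)),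
    (θ.symm _).2, ?_, ?_, ?_⟩
  · rw [orderOf_injective ι hι, MonoidHom.inl_apply, Prod.orderOf_mk, orderOf_one,
      Nat.lcm_one_right, hgen]
  · rw [orderOf_injective ι hι, MonoidHom.inr_apply, Prod.orderOf_mk, orderOf_one,
      Nat.lcm_one_left, hgen]
  · rw [← MonoidHom.map_zpowers ι, ← MonoidHom.map_zpowers ι]
    exact disjoint_map hι (Prod.disjoint_zpowers_inl_inr _ _)

theorem exists_isCyclic_pow_mem_of_mulEquiv_zmod_prod
    (θ : N ≃* Multiplicative (ZMod k) × Multiplicative (ZMod l)) :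
    ∃ K : Subgroup G, IsCyclic K ∧ ∀ g ∈ N, g ^ l ∈ K := by
  set κ : Multiplicative (ZMod k) →* G :=
    (N.subtype.comp θ.symm.toMonoidHom).comp (MonoidHom.inl _ _)
  refine ⟨κ.range, isCyclic_of_surjective _ κ.rangeRestrict_surjective, fun g hg => ?_⟩
  refine ⟨(θ ⟨g, hg⟩).1 ^ l, ?_⟩
  have : θ (⟨g, hg⟩ ^ l) = MonoidHom.inl _ _ ((θ ⟨g, hg⟩).1 ^ l) := by
    rw [map_pow θ]
    exact Prod.ext rfl (ZMod.multiplicative_pow_self _)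
  simp [κ, ← this]

theorem natCard_pow_eq_one_le_of_mulEquiv_zmod_prod [NeZero k] [NeZero l]
    (θ : N ≃* Multiplicative (ZMod k) × Multiplicative (ZMod l)) {q : ℕ} (hq : 0 < q) :
    Nat.card {g : N // g ^ q = 1} ≤ q ^ 2 := by
  rw [θ.natCard_pow_eq_one, Prod.natCard_pow_eq_one, sq]
  exact Nat.mul_le_mul (IsCyclic.natCard_pow_eq_one_le hq) (IsCyclic.natCard_pow_eq_one_le hq)

end ZModProd

section IndependentGenerators

variable {G ι : Type*} [Group G] {p : ℕ} [Fact p.Prime] {z : ι → G} {e : ι → ℕ}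

theorem le_of_orderOf_eq_of_mem_iSup_zpowers (hz : ∀ i, z i ∈ center G)
    (hord : ∀ i, orderOf (z i) = p ^ e i) {k n : ℕ} (he : ∀ i, e i ≤ k) {x : G}
    (hx : x ∈ ⨆ i, zpowers (z i)) (hxo : orderOf x = p ^ n) : n ≤ k := by
  have : x ^ p ^ k ∈ (⊥ : Subgroup G) :=
    pow_mem_of_mem_iSup_zpowers hz (fun i hi => (hi (hord i ▸ pow_dvd_pow p (he i))).elim) hx
  rw [← Nat.pow_dvd_pow_iff_le_right (Fact.out : p.Prime).one_lt, ← hxo]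
  exact orderOf_dvd_of_pow_eq_one (mem_bot.mp this)

theorem le_of_disjoint_zpowers [Finite G] (hz : ∀ i, z i ∈ center G)
    (hord : ∀ i, orderOf (z i) = p ^ e i) {i₀ : ι} {k n m : ℕ} (he : ∀ i ≠ i₀, e i ≤ k)
    (hm : 1 ≤ m) (hmn : m ≤ n) {u v : G} (hu : u ∈ ⨆ i, zpowers (z i))
    (hv : v ∈ ⨆ i, zpowers (z i)) (huo : orderOf u = p ^ n) (hvo : orderOf v = p ^ m)
    (huv : Disjoint (zpowers u) (zpowers v)) : m ≤ k := by
  have hp : p.Prime := Fact.out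
  by_contra! hkm
  have hmem {g : G} (hg : g ∈ ⨆ i, zpowers (z i)) {l : ℕ} (hl : k ≤ l) :
      g ^ p ^ l ∈ zpowers (z i₀) := by
    refine pow_mem_of_mem_iSup_zpowers hz (fun i hi => ?_) hg
    by_cases h : i = i₀
    · exact h ▸ mem_zpowers _
    · exact (hi (hord i ▸ pow_dvd_pow p ((he i h).trans hl))).elim
  have hcen : ⨆ i, zpowers (z i) ≤ center G := iSup_le fun i => zpowers_le.mpr (hz i)
  have huv' : Commute (u ^ p ^ (n - 1)) (v ^ p ^ (m - 1)) :=
    (show Commute u v from mem_center_iff.mp (hcen hv) u).pow_pow _ _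
  have := pow_card_le_natCard_pow_eq_one_of_iSupIndep (H := zpowers (z i₀)) (p := p)
    (w := ![u ^ p ^ (n - 1), v ^ p ^ (m - 1)])
    (Fin.forall_fin_two.mpr ⟨hmem hu (by omega), hmem hv (by omega)⟩)
    (Fin.forall_fin_two.mpr ⟨orderOf_pow_pow_pred hp.ne_zero (by omega) huo,
      orderOf_pow_pow_pred hp.ne_zero hm hvo⟩)
    (by intro i j hij; fin_cases i <;> fin_cases j <;> simp_all [huv'.symm])
    ((iSupIndep_pair (i := 0) (j := 1) (by decide) (by decide)).mpr
      (huv.mono (zpowers_le.mpr (pow_mem (mem_zpowers u) _))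
        (zpowers_le.mpr (pow_mem (mem_zpowers v) _))))
  have := this.trans (IsCyclic.natCard_pow_eq_one_le hp.pos)
  rw [Fintype.card_fin] at this
  exact absurd this (not_le.mpr (lt_self_pow₀ hp.one_lt one_lt_two))

theorem card_le_of_natCard_pow_eq_one_le [Finite G]
    (hcomm : Pairwise fun i j => Commute (z i) (z j)) (hord : ∀ i, orderOf (z i) = p ^ e i)
    (hind : iSupIndep fun i => zpowers (z i)) {H : Subgroup G} {k c : ℕ}
    (hH : ∀ g : G, g ^ p ^ k ∈ H) (hΩ : Nat.card {h : H // h ^ p = 1} ≤ p ^ c)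
    (S : Finset ι) (hS : ∀ i ∈ S, k < e i) : S.card ≤ c := by
  have hp : p.Prime := Fact.out
  have hmem (i : S) : z i ^ p ^ (e i - 1) ∈ H := by
    rw [show e i - 1 = e i - 1 - k + k by have := hS i i.2; omega, pow_add, pow_mul]
    exact hH _
  have := pow_card_le_natCard_pow_eq_one_of_iSupIndep hmem
    (fun i => orderOf_pow_pow_pred hp.ne_zero (by have := hS i i.2; omega) (hord i))
    (fun i j hij => (hcomm (Subtype.val_injective.ne hij)).pow_pow _ _)
    ((hind.comp Subtype.val_injective).mono fun i => zpowers_le.mpr (pow_mem (mem_zpowers _) _))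
  rw [Fintype.card_coe] at this
  exact (Nat.pow_le_pow_iff_right hp.one_lt).mp (this.trans hΩ)

end IndependentGenerators

theorem le_of_natCard_pow_eq_one_le {G : Type*} [Group G] [Finite G] {p r : ℕ} [Fact p.Prime]
    {z : Fin r → G} {e : Fin r → ℕ} (hcomm : Pairwise fun i j => Commute (z i) (z j))
    (hord : ∀ i, orderOf (z i) = p ^ e i) (hind : iSupIndep fun i => zpowers (z i))
    (he : Antitone e) {H : Subgroup G} {k c : ℕ} (hH : ∀ g : G, g ^ p ^ k ∈ H)
    (hΩ : Nat.card {h : H // h ^ p = 1} ≤ p ^ c) (hc : c < r) : e ⟨c, hc⟩ ≤ k := by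
  by_contra! h
  have := card_le_of_natCard_pow_eq_one_le hcomm hord hind hH hΩ (Finset.Iic ⟨c, hc⟩)
    fun i hi => h.trans_le (he (Finset.mem_Iic.mp hi))
  rw [Fin.card_Iic, Fin.val_mk] at this
  omega

/-- if `ζG = ⟨z_1⟩ × ⋯ × ⟨z_r⟩ ≅ ℤ_{p^{n_1}} × ⋯ × ℤ_{p^{n_r}}`
with `n_1 ≥ n_2 ≥ ⋯ ≥ n_r ≥ 1`, then `n ≤ n_1 ≤ n+1`, `m ≤ n_2 ≤ m+1`, and
`n_i = 1` for `3 ≤ i ≤ r`. -/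
theorem stmt_2 {p n m r : ℕ} [Fact p.Prime] (hm : 1 ≤ m) (hmn : m ≤ n)
    {G : Type*} [Group G] [Finite G]
    (N : Subgroup G) (hNZ : N ≤ Subgroup.center G)
    (hNiso : Nonempty (↥N ≃* Multiplicative (ZMod (p ^ n)) × Multiplicative (ZMod (p ^ m))))
    (hpow : ∀ x : G, x ^ p ∈ N)
    (hr : 2 ≤ r) (z : Fin r → G) (e : Fin r → ℕ)
    (hord : ∀ i, orderOf (z i) = p ^ (e i))
    (hmono : ∀ i j : Fin r, i ≤ j → e j ≤ e i)
    (hpos : ∀ i, 1 ≤ e i)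
    (hind : iSupIndep fun i => Subgroup.zpowers (z i))
    (hjoin : (⨆ i, Subgroup.zpowers (z i)) = Subgroup.center G) :
    n ≤ e ⟨0, by omega⟩ ∧ e ⟨0, by omega⟩ ≤ n + 1 ∧
    m ≤ e ⟨1, by omega⟩ ∧ e ⟨1, by omega⟩ ≤ m + 1 ∧
    ∀ i : Fin r, 2 ≤ (i : ℕ) → e i = 1 := by
  have hp : p.Prime := Fact.out
  obtain ⟨θ⟩ := hNiso
  have hz (i : Fin r) : z i ∈ center G := hjoin ▸ mem_iSup_of_mem i (mem_zpowers _)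
  have hcomm : Pairwise fun i j => Commute (z i) (z j) :=
    fun i j _ => mem_center_iff.mp (hz j) (z i)
  have hN : N ≤ ⨆ i, zpowers (z i) := hjoin ▸ hNZ
  obtain ⟨u, hu, v, hv, huo, hvo, huv⟩ := exists_disjoint_zpowers_of_mulEquiv_zmod_prod θ
  obtain ⟨K, hK, hNK⟩ := exists_isCyclic_pow_mem_of_mulEquiv_zmod_prod θ
  refine ⟨?_, ?_, ?_, ?_, fun i hi => ?_⟩
  · exact le_of_orderOf_eq_of_mem_iSup_zpowers hz hord (fun i => hmono _ i (Nat.zero_le _))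
      (hN hu) huo
  · rw [← Nat.pow_dvd_pow_iff_le_right hp.one_lt, ← hord]
    refine orderOf_dvd_of_pow_eq_one ?_
    rw [pow_succ', pow_mul]
    exact pow_eq_one_of_mulEquiv_zmod_prod θ (pow_dvd_pow p hmn) (hpow _)
  · exact le_of_disjoint_zpowers hz hord (i₀ := ⟨0, by omega⟩)
      (fun i hi => hmono _ i (Nat.one_le_iff_ne_zero.mpr fun h => hi (Fin.ext h)))
      hm hmn (hN hu) (hN hv) huo hvo huv
  · refine le_of_natCard_pow_eq_one_le hcomm hord hind (fun i j => hmono i j) (H := K)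
      (fun g => ?_) ((IsCyclic.natCard_pow_eq_one_le hp.pos).trans_eq (pow_one p).symm) _
    rw [pow_succ', pow_mul]
    exact hNK _ (hpow g)
  · have he₂ := le_of_natCard_pow_eq_one_le hcomm hord hind (fun i j => hmono i j)
      (fun g => (pow_one p).symm ▸ hpow g) (natCard_pow_eq_one_le_of_mulEquiv_zmod_prod θ hp.pos)
      (show 2 < r by omega)
    exact le_antisymm ((hmono _ i hi).trans he₂) (hpos i)
end

section
/- The order of the center of the normalized unit group is |ζ(V(𝔽_pG))| = p^{(|G| + (p−1)|ζG| − p)/p}. -/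
noncomputable section

/-- The augmentation map `ε : 𝔽_pG → 𝔽_p` of the group algebra. -/
def aug (p : ℕ) (G : Type*) [Group G] :
    MonoidAlgebra (ZMod p) G →ₐ[ZMod p] ZMod p :=
  MonoidAlgebra.lift (ZMod p) (ZMod p) G 1

/-- The group `V(𝔽_pG)` of normalized units, realized as the subgroup of the
unit group of the group algebra consisting of the units of augmentation `1`. -/
def normUnits (p : ℕ) (G : Type*) [Group G] :
    Subgroup (MonoidAlgebra (ZMod p) G)ˣ :=
  MonoidHom.ker (Units.map (aug p G).toRingHom.toMonoidHom)

/-- The image of `V(𝔽_pH)` inside the unit group of `𝔽_pG`, for a subgroup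
`H ≤ G`. -/
def normUnitsOf (p : ℕ) {G : Type*} [Group G] (H : Subgroup G) :
    Subgroup (MonoidAlgebra (ZMod p) G)ˣ :=
  Subgroup.map
    (Units.map (MonoidAlgebra.mapDomainRingHom (ZMod p) H.subtype).toMonoidHom)
    (normUnits p ↥H)

/-- `Ĉ_g`: the sum, in `𝔽_pG`, of the elements of the conjugacy class of `g`. -/
def classSum (p : ℕ) {G : Type*} [Group G] [Fintype G] (g : G) :
    MonoidAlgebra (ZMod p) G :=
  letI := Classical.decPred fun h : G => IsConj g h
  ∑ h ∈ Finset.univ.filter (fun h => IsConj g h), MonoidAlgebra.of (ZMod p) G h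

/-- The subgroup `C` generated by the elements `1 + Ĉ_g`, for `g` ranging over
the noncentral elements of `G`. -/
def Csub (p : ℕ) (G : Type*) [Group G] [Fintype G] :
    Subgroup (MonoidAlgebra (ZMod p) G)ˣ :=
  Subgroup.closure {u | ∃ g : G, g ∉ Subgroup.center G ∧
    (u : MonoidAlgebra (ZMod p) G) = 1 + classSum p g}

/-- The center of a subgroup `S`, realized as a subgroup of the ambient group. -/
def centerOf {W : Type*} [Group W] (S : Subgroup W) : Subgroup W :=
  Subgroup.centralizer (S : Set W) ⊓ S

/-- The subgroup `S^q` generated by the `q`-th powers of elements of `S`. -/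
def powSub {W : Type*} [Group W] (S : Subgroup W) (q : ℕ) : Subgroup W :=
  Subgroup.closure {x | ∃ v ∈ S, x = v ^ q}

/-- `Ω_l(S)`: the subgroup generated by the elements `x ∈ S` with `x^{p^l} = 1`. -/
def omegaSub {W : Type*} [Group W] (p l : ℕ) (S : Subgroup W) : Subgroup W :=
  Subgroup.closure {x | x ∈ S ∧ x ^ p ^ l = 1}

/-- The subgroup `G^q` of `G` generated by `q`-th powers. -/
def pthPowers (G : Type*) [Group G] (q : ℕ) : Subgroup G :=
  Subgroup.closure {x : G | ∃ g : G, x = g ^ q}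

/-- `Ω(G, q)`: the subgroup of `G` generated by the elements `x` with `x^q = 1`. -/
def omegaGrp (G : Type*) [Group G] (q : ℕ) : Subgroup G :=
  Subgroup.closure {x : G | x ^ q = 1}

/-- `Δ(G,H)`: the (left) ideal of `𝔽_pG` generated by `{h - 1 : h ∈ H}`. -/
def deltaIdeal (p : ℕ) (G : Type*) [Group G] (H : Subgroup G) :
    Ideal (MonoidAlgebra (ZMod p) G) :=
  Ideal.span {x | ∃ h ∈ H, x = MonoidAlgebra.of (ZMod p) G h - 1}

open scoped commutatorElement

/-!
A unit of `V(𝔽_pG)` commutes with `V(𝔽_pG) ⊇ G` iff it is central in `𝔽_pG`, i.e. a class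
function. Conversely every central `x` with `ε x = 1` is a unit, because `x - ε x` is a sum of
commuting nilpotents `a_K (K̂ - |K|)` over the conjugacy classes `K`: a central class `{z}`
gives `z - 1`, nilpotent since `G` is a `p`-group, while a noncentral class is a coset `⟨c⟩g`
(the commutator map `u ↦ ⁅u, g⁆` is a nontrivial homomorphism into `⟨c⟩`), so
`K̂ = (∑ cⁱ) g` has square `p · (∑ cⁱ) g² = 0` and augmentation `p = 0`. Thus `ζ(V(𝔽_pG))` is
the fibre over `1` of `ε` on the centre `Z(𝔽_pG) ≅ 𝔽_p^k`, `k` the class number, of size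
`p^(k-1)`; and as noncentral classes have `p` elements, `p k = |G| + (p - 1)|ζG|`.
-/

open scoped MonoidAlgebra
open MonoidAlgebra Finset

namespace MonoidAlgebra

theorem mem_center_of_commute_of {R M : Type*} [CommSemiring R] [Monoid M] {x : R[M]}
    (h : ∀ m, Commute (of R M m) x) : x ∈ Subalgebra.center R R[M] :=
  Subalgebra.mem_center_iff.mpr fun y => by
    induction y using MonoidAlgebra.induction_on with
    | of m => exact h m
    | add y z hy hz => rw [add_mul, mul_add, hy, hz]
    | smul r y hy => rw [smul_mul_assoc, hy, mul_smul_comm]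

variable {R G : Type*} [CommSemiring R] [Group G]

theorem mem_center_iff_isConj {x : R[G]} :
    x ∈ Subalgebra.center R R[G] ↔ ∀ a b : G, IsConj a b → x.coeff a = x.coeff b := by
  refine ⟨fun hx a b hab => ?_, fun hx => Subalgebra.mem_center_iff.mpr fun y => ?_⟩
  · obtain ⟨u, rfl⟩ := isConj_iff.mp hab
    have := congrArg (fun y : R[G] => y.coeff (u * a))
      (Subalgebra.mem_center_iff.mp hx (single u 1))
    simpa [mul_assoc] using this
  · induction y using MonoidAlgebra.induction_linear with
    | zero => simp
    | add y z hy hz => rw [add_mul, mul_add, hy, hz]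
    | single g r =>
      ext h
      rw [coeff_single_mul_apply, coeff_mul_single_apply, mul_comm,
        hx (g⁻¹ * h) (h * g⁻¹) (isConj_iff.mpr ⟨g, by group⟩)]

theorem coeff_out_mk_of_mem_center {x : R[G]} (hx : x ∈ Subalgebra.center R R[G]) (g : G) :
    x.coeff (ConjClasses.mk g).out = x.coeff g :=
  mem_center_iff_isConj.mp hx _ _
    (ConjClasses.mk_eq_mk_iff_isConj.mp (Quotient.out_eq (ConjClasses.mk g)))

def centerEquivConjClassesFun [Finite G] :
    Subalgebra.center R R[G] ≃ (ConjClasses G → R) where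
  toFun x O := x.1.coeff O.out
  invFun F := ⟨ofCoeff (Finsupp.equivFunOnFinite.symm (F ∘ ConjClasses.mk)),
    mem_center_iff_isConj.mpr fun a b hab => by
      simp [ConjClasses.mk_eq_mk_iff_isConj.mpr hab]⟩
  left_inv x := by
    ext g
    exact coeff_out_mk_of_mem_center x.2 g
  right_inv F := funext fun O => congrArg F (Quotient.out_eq O)

theorem natCard_center [Finite G] :
    Nat.card (Subalgebra.center R R[G]) = Nat.card R ^ Nat.card (ConjClasses G) := by
  rw [Nat.card_congr centerEquivConjClassesFun, Nat.card_fun]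

end MonoidAlgebra

theorem AddMonoidHom.natCard_fiber_mul_natCard {M N : Type*} [AddGroup M] [AddGroup N]
    {f : M →+ N} (hf : Function.Surjective f) (y : N) :
    Nat.card {x // f x = y} * Nat.card N = Nat.card M := by
  have e : {x // f x = y} ≃ f.ker := f.fiberEquivKerOfSurjective hf y
  rw [Nat.card_congr e, ← f.ker.card_mul_index, AddSubgroup.index_ker,
    f.range_eq_top_of_surjective hf, AddSubgroup.card_top]

theorem geom_sum_mul_self_of_pow_eq_one {R : Type*} [Ring R] {x : R} {n : ℕ} (hx : x ^ n = 1) :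
    (∑ i ∈ range n, x ^ i) * (∑ i ∈ range n, x ^ i) = n • ∑ i ∈ range n, x ^ i := by
  set S := ∑ i ∈ range n, x ^ i
  have hSx : S * x = S := by
    have := geom_sum_mul x n
    rwa [hx, sub_self, mul_sub, mul_one, sub_eq_zero] at this
  have hSpow : ∀ i, S * x ^ i = S := by
    intro i
    induction i with
    | zero => rw [pow_zero, mul_one]
    | succ i ih => rw [pow_succ, ← mul_assoc, ih, hSx]
  rw [mul_sum, sum_congr rfl fun i _ => hSpow i, sum_const, card_range]

section CentralCyclicDerived

variable {G : Type*} [Group G]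

def commutatorHom (h : ∀ x y : G, ⁅x, y⁆ ∈ Subgroup.center G) (g : G) : G →* G where
  toFun u := ⁅u, g⁆
  map_one' := by simp [commutatorElement_def]
  map_mul' u v := by
    have hv := Subgroup.mem_center_iff.mp (h v g)
    calc ⁅u * v, g⁆ = u * ⁅v, g⁆ * (g * u⁻¹ * g⁻¹) := by
          simp only [commutatorElement_def]; group
      _ = ⁅v, g⁆ * ⁅u, g⁆ := by rw [hv u]; simp only [commutatorElement_def]; group
      _ = ⁅u, g⁆ * ⁅v, g⁆ := Subgroup.mem_center_iff.mp (h u g) _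

variable {c : G}

theorem commutatorElement_mem_center (hc : commutator G = Subgroup.zpowers c)
    (hcZ : c ∈ Subgroup.center G) (x y : G) : ⁅x, y⁆ ∈ Subgroup.center G :=
  Subgroup.zpowers_le.mpr hcZ <|
    hc ▸ Subgroup.commutator_mem_commutator (Subgroup.mem_top x) (Subgroup.mem_top y)

theorem injOn_pow_mul_range {p : ℕ} (hcp : orderOf c = p) (g : G) :
    Set.InjOn (fun i => c ^ i * g) (range p) :=
  fun i hi j hj hij => pow_injOn_Iio_orderOf (x := c) (by simpa [hcp] using hi)
    (by simpa [hcp] using hj) (mul_right_cancel hij)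

variable [Fintype G] {p : ℕ} [hp : Fact p.Prime]

theorem range_commutatorHom (hc : commutator G = Subgroup.zpowers c)
    (hcZ : c ∈ Subgroup.center G) (hcp : orderOf c = p) {g : G} (hg : g ∉ Subgroup.center G) :
    (commutatorHom (commutatorElement_mem_center hc hcZ) g).range = Subgroup.zpowers c := by
  set φ := commutatorHom (commutatorElement_mem_center hc hcZ) g
  have hle : φ.range ≤ Subgroup.zpowers c := by
    rintro _ ⟨u, rfl⟩
    exact hc ▸ Subgroup.commutator_mem_commutator (Subgroup.mem_top u) (Subgroup.mem_top g)
  have hcard : Nat.card (Subgroup.zpowers c) = p := by rw [Nat.card_zpowers, hcp]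
  refine Subgroup.eq_of_le_of_card_ge hle ?_
  rcases hp.out.eq_one_or_self_of_dvd _ (hcard ▸ Subgroup.card_dvd_of_le hle) with h1 | hpc
  · refine absurd (Subgroup.mem_center_iff.mpr fun u => ?_) hg
    have : φ u = 1 :=
      Subgroup.mem_bot.mp (Subgroup.card_eq_one.mp h1 ▸ MonoidHom.mem_range.mpr ⟨u, rfl⟩)
    exact commutatorElement_eq_one_iff_mul_comm.mp this
  · rw [hcard, hpc]

theorem isConj_iff_exists_zpowers_mul (hc : commutator G = Subgroup.zpowers c)
    (hcZ : c ∈ Subgroup.center G) (hcp : orderOf c = p) {g : G} (hg : g ∉ Subgroup.center G)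
    (h : G) : IsConj g h ↔ ∃ k ∈ Subgroup.zpowers c, k * g = h := by
  have hconj : ∀ u, u * g * u⁻¹ = ⁅u, g⁆ * g := fun u => by rw [commutatorElement_def]; group
  simp only [isConj_iff, hconj, ← range_commutatorHom hc hcZ hcp hg, MonoidHom.mem_range,
    exists_exists_eq_and]
  rfl

theorem filter_isConj_eq_image [DecidableEq G] {g : G} [DecidablePred (IsConj g)]
    (hc : commutator G = Subgroup.zpowers c) (hcZ : c ∈ Subgroup.center G)
    (hcp : orderOf c = p) (hg : g ∉ Subgroup.center G) :
    univ.filter (fun h => IsConj g h) = (range p).image (fun i => c ^ i * g) := by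
  ext h
  simp only [mem_filter, mem_univ, true_and, isConj_iff_exists_zpowers_mul hc hcZ hcp hg,
    mem_zpowers_iff_mem_range_orderOf, hcp, mem_image]
  grind

theorem card_filter_isConj {g : G} [DecidablePred (IsConj g)]
    (hc : commutator G = Subgroup.zpowers c) (hcZ : c ∈ Subgroup.center G)
    (hcp : orderOf c = p) (hg : g ∉ Subgroup.center G) :
    (univ.filter (fun h => IsConj g h)).card = p := by
  classical
  rw [filter_isConj_eq_image hc hcZ hcp hg, card_image_of_injOn (injOn_pow_mul_range hcp g),
    card_range]

theorem card_mul_card_conjClasses (hc : commutator G = Subgroup.zpowers c)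
    (hcZ : c ∈ Subgroup.center G) (hcp : orderOf c = p) :
    p * Nat.card (ConjClasses G) = Nat.card G + (p - 1) * Nat.card (Subgroup.center G) := by
  classical
  have hnon : ∀ x ∈ (ConjClasses.noncenter G).toFinset, x.carrier.toFinset.card = p := by
    intro x hx
    obtain ⟨g, rfl⟩ := ConjClasses.mk_surjective x
    have hg : g ∉ Subgroup.center G := fun hg =>
      (ConjClasses.mk_bijOn G).mapsTo hg (Set.mem_toFinset.mp hx)
    rw [← card_filter_isConj hc hcZ hcp hg]
    congr 1
    ext h
    simp only [Set.mem_toFinset, ConjClasses.mem_carrier_iff_mk_eq,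
      ConjClasses.mk_eq_mk_iff_isConj, mem_filter, mem_univ, true_and]
    exact isConj_comm
  have hclass := Group.card_center_add_sum_card_noncenter_eq_card G
  rw [sum_congr rfl hnon, sum_const, smul_eq_mul] at hclass
  have hcenter :
      Fintype.card (Subgroup.center G) = ((ConjClasses.noncenter G)ᶜ).toFinset.card := by
    rw [Set.toFinset_card]
    exact Fintype.card_congr ((ConjClasses.mk_bijOn G).equiv _)
  have hk : Fintype.card (ConjClasses G)
      = Fintype.card (Subgroup.center G) + (ConjClasses.noncenter G).toFinset.card := by
    rw [hcenter, Set.toFinset_compl, card_compl_add_card]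
  simp only [Nat.card_eq_fintype_card, hk, ← hclass]
  obtain ⟨q, rfl⟩ : ∃ q, p = q + 1 := ⟨p - 1, (Nat.sub_add_cancel hp.out.one_le).symm⟩
  simp only [add_tsub_cancel_right]
  ring

end CentralCyclicDerived

theorem aug_of {p : ℕ} {G : Type*} [Group G] (g : G) : aug p G (of (ZMod p) G g) = 1 := by
  simp [aug]

theorem isNilpotent_of_sub_one {p : ℕ} [Fact p.Prime] {G : Type*} [Group G]
    (hpG : IsPGroup p G) (g : G) : IsNilpotent (of (ZMod p) G g - 1) := by
  have := charP_of_injective_algebraMap' (ZMod p) (A := (ZMod p)[G]) p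
  obtain ⟨k, hk⟩ := hpG g
  exact ⟨p ^ k, by rw [sub_pow_char_pow_of_commute p k (Commute.one_right _), ← map_pow, hk,
    map_one, one_pow, sub_self]⟩

section ClassSum

variable {p : ℕ} {G : Type*} [Group G] [Fintype G]

open Classical in
theorem coeff_classSum (g h : G) :
    (classSum p g).coeff h = if IsConj g h then 1 else 0 := by
  simp [classSum, coeff_sum, Finsupp.single_apply]

theorem classSum_mem_center (g : G) :
    classSum p g ∈ Subalgebra.center (ZMod p) (ZMod p)[G] := by
  classical
  refine mem_center_iff_isConj.mpr fun a b hab => ?_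
  have hconj : IsConj g a ↔ IsConj g b := ⟨fun h => h.trans hab, fun h => h.trans hab.symm⟩
  simp only [coeff_classSum, hconj]

theorem eq_sum_classSum [Fintype (ConjClasses G)] {x : (ZMod p)[G]}
    (hx : x ∈ Subalgebra.center (ZMod p) (ZMod p)[G]) :
    x = ∑ O : ConjClasses G, x.coeff O.out • classSum p O.out := by
  classical
  ext h
  have hO : ∀ O : ConjClasses G, IsConj O.out h ↔ O = ConjClasses.mk h := fun O => by
    rw [← ConjClasses.mk_eq_mk_iff_isConj]
    exact ⟨fun h => (Quotient.out_eq O).symm.trans h, fun h => (Quotient.out_eq O).trans h⟩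
  rw [coeff_sum, sum_apply']
  simp only [coeff_smul, Finsupp.smul_apply, coeff_classSum, hO, smul_eq_mul, mul_ite, mul_one,
    mul_zero, sum_ite_eq', mem_univ, if_true]
  exact (coeff_out_mk_of_mem_center hx h).symm

theorem classSum_of_mem_center {g : G} (hg : g ∈ Subgroup.center G) :
    classSum p g = of (ZMod p) G g := by
  classical
  ext h
  rw [coeff_classSum, of_apply, coeff_single, Finsupp.single_apply]
  congr 1
  exact propext ⟨fun hgh => hgh.eq_of_left_mem_center (Set.mem_center_iff.mpr hg),
    fun hgh => hgh ▸ IsConj.refl g⟩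

variable [Fact p.Prime] {c : G}

theorem classSum_eq_geom_sum_mul (hc : commutator G = Subgroup.zpowers c)
    (hcZ : c ∈ Subgroup.center G) (hcp : orderOf c = p) {g : G} (hg : g ∉ Subgroup.center G) :
    classSum p g = (∑ i ∈ range p, of (ZMod p) G c ^ i) * of (ZMod p) G g := by
  classical
  rw [classSum, filter_congr_decidable, filter_isConj_eq_image hc hcZ hcp hg,
    sum_image (injOn_pow_mul_range hcp g), sum_mul]
  simp [map_mul, map_pow]

theorem isNilpotent_classSum_sub_aug (hc : commutator G = Subgroup.zpowers c)
    (hcZ : c ∈ Subgroup.center G) (hcp : orderOf c = p) (hpG : IsPGroup p G) (g : G) :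
    IsNilpotent (classSum p g - algebraMap (ZMod p) (ZMod p)[G] (aug p G (classSum p g))) := by
  by_cases hg : g ∈ Subgroup.center G
  · rw [classSum_of_mem_center hg, aug_of, map_one]
    exact isNilpotent_of_sub_one hpG g
  have hcpow : c ^ p = 1 := hcp ▸ pow_orderOf_eq_one c
  set S := ∑ i ∈ range p, of (ZMod p) G c ^ i
  have hS : S * S = 0 := by
    rw [geom_sum_mul_self_of_pow_eq_one (by rw [← map_pow, hcpow, map_one]),
      ← Nat.cast_smul_eq_nsmul (ZMod p), ZMod.natCast_self, zero_smul]
  have hgS : Commute (of (ZMod p) G g) S := Commute.sum_right _ _ _ fun i _ =>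
    (Commute.map (Subgroup.mem_center_iff.mp hcZ g) (of (ZMod p) G)).pow_right i
  have haug : aug p G S = 0 := by
    simp only [S, map_sum, map_pow, aug_of, one_pow, sum_const, card_range, nsmul_eq_mul,
      mul_one, ZMod.natCast_self]
  rw [classSum_eq_geom_sum_mul hc hcZ hcp hg, map_mul, haug, zero_mul, map_zero, sub_zero]
  refine ⟨2, ?_⟩
  rw [pow_two, mul_assoc, ← mul_assoc (of _ _ g), hgS.eq, ← mul_assoc, ← mul_assoc, hS,
    zero_mul, zero_mul]

theorem isNilpotent_sub_algebraMap_aug (hc : commutator G = Subgroup.zpowers c)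
    (hcZ : c ∈ Subgroup.center G) (hcp : orderOf c = p) (hpG : IsPGroup p G) {x : (ZMod p)[G]}
    (hx : x ∈ Subalgebra.center (ZMod p) (ZMod p)[G]) :
    IsNilpotent (x - algebraMap (ZMod p) (ZMod p)[G] (aug p G x)) := by
  classical
  set f : ConjClasses G → (ZMod p)[G] := fun O =>
    classSum p O.out - algebraMap (ZMod p) (ZMod p)[G] (aug p G (classSum p O.out))
  have hf : ∀ O, f O ∈ Subalgebra.center (ZMod p) (ZMod p)[G] := fun O =>
    sub_mem (classSum_mem_center _) (Subalgebra.algebraMap_mem _ _)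
  have hdecomp : x - algebraMap (ZMod p) (ZMod p)[G] (aug p G x) = ∑ O, x.coeff O.out • f O := by
    conv_lhs => rw [eq_sum_classSum hx]
    simp only [f, map_sum, map_smul, smul_eq_mul, map_mul, ← Algebra.smul_def, smul_sub,
      sum_sub_distrib]
  rw [hdecomp]
  refine Commute.isNilpotent_sum (fun O _ => ?_) fun O O' _ _ => ?_
  · exact (isNilpotent_classSum_sub_aug hc hcZ hcp hpG _).smul _
  · exact Subalgebra.mem_center_iff.mp (Subalgebra.smul_mem _ (hf O') _) _

end ClassSum

section NormalizedUnits

variable {p : ℕ} {G : Type*} [Group G]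

theorem mem_normUnits_iff {u : ((ZMod p)[G])ˣ} : u ∈ normUnits p G ↔ aug p G u = 1 := by
  rw [normUnits, MonoidHom.mem_ker, Units.ext_iff]
  rfl

theorem mem_centerOf_normUnits_iff {u : ((ZMod p)[G])ˣ} :
    u ∈ centerOf (normUnits p G) ↔
      (u : (ZMod p)[G]) ∈ Subalgebra.center (ZMod p) (ZMod p)[G] ∧ aug p G u = 1 := by
  rw [centerOf, Subgroup.mem_inf, Subgroup.mem_centralizer_iff, mem_normUnits_iff]
  refine and_congr_left fun _ => ⟨fun h => mem_center_of_commute_of fun g => ?_,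
    fun h v _ => Units.ext (Subalgebra.mem_center_iff.mp h v)⟩
  exact congrArg Units.val (h ((of (ZMod p) G).toHomUnits g) (mem_normUnits_iff.mpr (aug_of g)))

theorem natCard_centerOf_normUnits
    (hunit : ∀ x ∈ Subalgebra.center (ZMod p) (ZMod p)[G], aug p G x = 1 → IsUnit x) :
    Nat.card (centerOf (normUnits p G)) =
      Nat.card {x : Subalgebra.center (ZMod p) (ZMod p)[G] // aug p G x = 1} :=
  Nat.card_congr
    { toFun u := ⟨⟨u.1, (mem_centerOf_normUnits_iff.mp u.2).1⟩,
        (mem_centerOf_normUnits_iff.mp u.2).2⟩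
      invFun x := ⟨(hunit x.1 x.1.2 x.2).unit, mem_centerOf_normUnits_iff.mpr ⟨x.1.2, x.2⟩⟩
      left_inv _ := Subtype.ext (Units.ext rfl)
      right_inv _ := rfl }

theorem natCard_center_aug_eq_one [Fact p.Prime] [Finite G] :
    Nat.card {x : Subalgebra.center (ZMod p) (ZMod p)[G] // aug p G x = 1} =
      p ^ (Nat.card (ConjClasses G) - 1) := by
  let ε : Subalgebra.center (ZMod p) (ZMod p)[G] →+ ZMod p :=
    ((aug p G).comp (Subalgebra.center (ZMod p) (ZMod p)[G]).val).toLinearMap.toAddMonoidHom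
  have hsurj : Function.Surjective ε :=
    fun r => ⟨⟨_, Subalgebra.algebraMap_mem _ r⟩, (aug p G).commutes r⟩
  have h : Nat.card {x : Subalgebra.center (ZMod p) (ZMod p)[G] // aug p G x = 1} *
      Nat.card (ZMod p) = Nat.card (Subalgebra.center (ZMod p) (ZMod p)[G]) :=
    AddMonoidHom.natCard_fiber_mul_natCard hsurj 1
  rw [natCard_center, Nat.card_zmod] at h
  obtain ⟨k, hk⟩ := Nat.exists_eq_add_one_of_ne_zero (Nat.card_pos (α := ConjClasses G)).ne'
  rw [hk, pow_succ] at h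
  rw [hk, add_tsub_cancel_right]
  exact Nat.eq_of_mul_eq_mul_right (Fact.out : p.Prime).pos h

end NormalizedUnits

theorem stmt_15_general {p : ℕ} [Fact p.Prime]
    {G : Type*} [Group G] [Fintype G] (hpG : IsPGroup p G)
    (N : Subgroup G) (hNZ : N ≤ Subgroup.center G)
    (hcomm : ∀ x y : G, ⁅x, y⁆ ∈ N)
    (c : G) (hc : commutator G = Subgroup.zpowers c) (hcp : orderOf c = p) :
    Nat.card ↥(centerOf (normUnits p G)) =
      p ^ ((Nat.card G + (p - 1) * Nat.card ↥(Subgroup.center G) - p) / p) := by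
  have hcZ : c ∈ Subgroup.center G := hNZ <| (commutator_def G ▸ Subgroup.commutator_le.mpr
    fun u _ v _ => hcomm u v) (hc ▸ Subgroup.mem_zpowers c)
  have hunit : ∀ x ∈ Subalgebra.center (ZMod p) (ZMod p)[G], aug p G x = 1 → IsUnit x :=
    fun x hx hx1 => by
      have := (isNilpotent_sub_algebraMap_aug hc hcZ hcp hpG hx).isUnit_add_one
      rwa [hx1, map_one, sub_add_cancel] at this
  rw [natCard_centerOf_normUnits hunit, natCard_center_aug_eq_one,
    ← card_mul_card_conjClasses hc hcZ hcp, ← Nat.mul_sub_one,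
    Nat.mul_div_cancel_left _ (Fact.out : p.Prime).pos]

/-- `|ζ(V(𝔽_pG))| = p^{(|G| + (p-1)|ζG| - p)/p}`. -/
theorem stmt_15 {p n m : ℕ} [Fact p.Prime] (hp : Odd p) (hm : 1 ≤ m) (hmn : m ≤ n)
    {G : Type*} [Group G] [Fintype G] (hpG : IsPGroup p G)
    (N : Subgroup G) (hNZ : N ≤ Subgroup.center G)
    (hNiso : Nonempty (↥N ≃* Multiplicative (ZMod (p ^ n)) × Multiplicative (ZMod (p ^ m))))
    (hpow : ∀ x : G, x ^ p ∈ N) (hcomm : ∀ x y : G, ⁅x, y⁆ ∈ N)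
    (c : G) (hc : commutator G = Subgroup.zpowers c) (hcp : orderOf c = p) :
    Nat.card ↥(centerOf (normUnits p G)) =
      p ^ ((Nat.card G + (p - 1) * Nat.card ↥(Subgroup.center G) - p) / p) :=
  stmt_15_general hpG N hNZ hcomm c hc hcp
end
end
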